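/- arXiv:1602.00901 — 2 statements merged into one kernel-verified Lean document; each statement's English description precedes it below -/
import Mathlib

section
/- Let m ≥ 1, let a₁ ≥ a₂ ≥ … ≥ a_m be rationals in (0, 1), and set d := 2 − (a₁ + … + a_m); assume d > 0. For a ∈ [0, 1) define β(a) := (1 − a)·d − d²/2 and j := d²/2. Then the following are equivalent: (i) there exists δ ∈ (0, 1) such that β(a_i) ≥ δ·j for all i ∈ {1, …, m} and β(0) ≥ δ·j; (ii) a₂ + a₃ + … + a_m > a₁. -/
open Finset

theorem stmt_4 (m : ℕ) (hm : 0 < m) (a : Fin m → ℝ)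
    (hrat : ∀ i, ∃ q : ℚ, a i = (q : ℝ))
    (hmono : ∀ i j : Fin m, i ≤ j → a j ≤ a i)
    (hrange : ∀ i, a i ∈ Set.Ioo (0:ℝ) 1)
    (hd : 0 < 2 - ∑ i, a i) :
    (∃ δ : ℝ, 0 < δ ∧ δ < 1 ∧
      (∀ i, (1 - a i) * (2 - ∑ i, a i) - (2 - ∑ i, a i)^2 / 2 ≥
        δ * ((2 - ∑ i, a i)^2 / 2)) ∧
      (1 - 0) * (2 - ∑ i, a i) - (2 - ∑ i, a i)^2 / 2 ≥
        δ * ((2 - ∑ i, a i)^2 / 2)) ↔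
    a ⟨0, hm⟩ < ∑ i ∈ Finset.univ.erase ⟨0, hm⟩, a i := by
  set S : ℝ := ∑ i, a i with hS
  set d : ℝ := 2 - S with hdd
  have hsum : (∑ i ∈ Finset.univ.erase ⟨0, hm⟩, a i) + a ⟨0, hm⟩ = S :=
    Finset.sum_erase_add _ _ (Finset.mem_univ _)
  set a0 : ℝ := a ⟨0, hm⟩ with ha0
  have hj : 0 < d ^ 2 / 2 := by positivity
  constructor
  · rintro ⟨δ, hδ0, hδ1, h, -⟩
    have h0 := h ⟨0, hm⟩
    have hpos : 0 < δ * (d ^ 2 / 2) := by positivity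
    have : (1 - a0) * d - d ^ 2 / 2 > 0 := lt_of_lt_of_le hpos h0
    nlinarith [this, hd]
  · intro hlt
    have ha0pos : 0 < a0 := (hrange ⟨0, hm⟩).1
    have hεpos : 0 < (1 - a0) * d - d ^ 2 / 2 := by nlinarith
    set ε : ℝ := (1 - a0) * d - d ^ 2 / 2 with hε
    refine ⟨min (ε / (d ^ 2 / 2)) (1 / 2), ?_, ?_, ?_, ?_⟩
    · exact lt_min (by positivity) (by norm_num)
    · exact lt_of_le_of_lt (min_le_right _ _) (by norm_num)
    · intro i
      have hai : a i ≤ a0 := hmono ⟨0, hm⟩ i (by simp [Fin.le_def])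
      have h1 : min (ε / (d ^ 2 / 2)) (1 / 2) * (d ^ 2 / 2) ≤ ε := by
        calc min (ε / (d ^ 2 / 2)) (1 / 2) * (d ^ 2 / 2)
            ≤ (ε / (d ^ 2 / 2)) * (d ^ 2 / 2) :=
              mul_le_mul_of_nonneg_right (min_le_left _ _) hj.le
          _ = ε := div_mul_cancel₀ _ hj.ne'
      have : ε ≤ (1 - a i) * d - d ^ 2 / 2 := by nlinarith
      linarith
    · have h1 : min (ε / (d ^ 2 / 2)) (1 / 2) * (d ^ 2 / 2) ≤ ε := by
        calc min (ε / (d ^ 2 / 2)) (1 / 2) * (d ^ 2 / 2)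
            ≤ (ε / (d ^ 2 / 2)) * (d ^ 2 / 2) :=
              mul_le_mul_of_nonneg_right (min_le_left _ _) hj.le
          _ = ε := div_mul_cancel₀ _ hj.ne'
      nlinarith
end

section
/- Let m ≥ 1, let a₁ ≥ … ≥ a_m be rationals in (0, 1) with d := 2 − Σᵢ aᵢ > 0. Define β(a) := (1 − a)·d − d²/2 for a ∈ [0, 1). Then β(a) ≥ 0 for all a ∈ {0, a₁, …, a_m} if and only if a₂ + … + a_m ≥ a₁. -/
open Finset

theorem stmt_5 (m : ℕ) (hm : 0 < m) (a : Fin m → ℝ)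
    (hrat : ∀ i, ∃ q : ℚ, a i = (q : ℝ))
    (hmono : ∀ i j : Fin m, i ≤ j → a j ≤ a i)
    (hrange : ∀ i, a i ∈ Set.Ioo (0:ℝ) 1)
    (hd : 0 < 2 - ∑ i, a i) :
    ((∀ i, 0 ≤ (1 - a i) * (2 - ∑ i, a i) - (2 - ∑ i, a i)^2 / 2) ∧
      0 ≤ (1 - 0) * (2 - ∑ i, a i) - (2 - ∑ i, a i)^2 / 2) ↔
    a ⟨0, hm⟩ ≤ ∑ i ∈ Finset.univ.erase ⟨0, hm⟩, a i := by
  have hsum : ∑ i ∈ Finset.univ.erase ⟨0, hm⟩, a i = (∑ i, a i) - a ⟨0, hm⟩ :=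
    Finset.sum_erase_eq_sub (mem_univ _)
  rw [hsum]
  constructor
  · rintro ⟨h, -⟩
    have h0 := h ⟨0, hm⟩
    nlinarith
  · intro h
    have h0 := (hrange ⟨0, hm⟩).1
    constructor
    · intro i
      have hi : a i ≤ a ⟨0, hm⟩ := hmono ⟨0, hm⟩ i (by simp [Fin.le_def])
      nlinarith
    · nlinarith
end
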